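/- arXiv:2508.12568 — 7 statements merged into one kernel-verified Lean document; each statement's English description precedes it below -/
import Mathlib

section
/- Let E be a normed vector lattice and F a Dedekind complete vector lattice. Then the set L_nob(E,F) of norm to order bounded operators from E to F is an ideal in the vector lattice L_r(E,F) of regular operators: if S is regular, T is norm to order bounded, and |S| ≤ |T|, then S is norm to order bounded. More precisely, if |Tx| ≤ ‖x‖·t for all x ∈ E with t ∈ F⁺, then |Sx| ≤ 2‖x‖·t for all x ∈ E. -/
/-! A norm bound `|f x| ≤ ‖x‖ • t` on a nontrivial real normed space forces `c • t ≥ 0` for every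
`c ≥ 0` (evaluate it at a vector of norm `c`), so `c ↦ c • t` is monotone even though `F` carries
no ordered-module structure. With a solid norm, every `y` with `|y| ≤ |x|` then has
`|T y| ≤ ‖y‖ • t ≤ ‖x‖ • t`, so the Riesz–Kantorovich supremum gives `|T| |x| ≤ ‖x‖ • t`, and
`|S x| ≤ |S| |x| ≤ |T| |x|`. -/

section NormToOrderBound

variable {E F : Type*} [NormedAddCommGroup E] [NormedSpace ℝ E] [Nontrivial E]
  [Lattice F] [AddCommGroup F] [AddLeftMono F] [Module ℝ F] {f : E → F} {t : F}

theorem smul_nonneg_of_abs_le_norm_smul (hf : ∀ x, |f x| ≤ ‖x‖ • t) {c : ℝ} (hc : 0 ≤ c) :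
    0 ≤ c • t := by
  obtain ⟨x, rfl⟩ := exists_norm_eq E hc
  exact (abs_nonneg (f x)).trans (hf x)

theorem smul_le_smul_of_abs_le_norm_smul (hf : ∀ x, |f x| ≤ ‖x‖ • t) {a b : ℝ} (hab : a ≤ b) :
    a • t ≤ b • t :=
  calc a • t ≤ a • t + (b - a) • t :=
        le_add_of_nonneg_right (smul_nonneg_of_abs_le_norm_smul hf (sub_nonneg.mpr hab))
    _ = b • t := by rw [← add_smul, add_sub_cancel]

theorem abs_apply_le_norm_smul_of_abs_le [Lattice E] [IsOrderedAddMonoid E] [HasSolidNorm E]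
    (hf : ∀ x, |f x| ≤ ‖x‖ • t) {x y : E} (hyx : |y| ≤ |x|) : |f y| ≤ ‖x‖ • t :=
  (hf y).trans (smul_le_smul_of_abs_le_norm_smul hf (norm_le_norm_of_abs_le_abs hyx))

end NormToOrderBound

theorem stmt_5_general {E F : Type*}
    [NormedAddCommGroup E] [Lattice E] [HasSolidNorm E] [IsOrderedAddMonoid E]
    [NormedSpace ℝ E]
    [Lattice F] [AddCommGroup F] [CovariantClass F F (· + ·) (· ≤ ·)]
    [Module ℝ F]
    (S T absS absT : E →ₗ[ℝ] F) (t : F)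
    (hT : ∀ x : E, |T x| ≤ ‖x‖ • t)
    (habsT : ∀ x : E, 0 ≤ x →
      IsLUB {z : F | ∃ y : E, |y| ≤ x ∧ z = |T y|} (absT x))
    (habsS : ∀ x : E, 0 ≤ x →
      IsLUB {z : F | ∃ y : E, |y| ≤ x ∧ z = |S y|} (absS x))
    (hle : ∀ x : E, 0 ≤ x → absS x ≤ absT x) :
    ∀ x : E, |S x| ≤ (2 * ‖x‖) • t := by
  intro x
  rcases eq_or_ne x 0 with rfl | hx
  · simp
  have : Nontrivial E := nontrivial_of_ne x 0 hx
  have hT_abs : absT |x| ≤ ‖x‖ • t := by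
    refine (habsT |x| (abs_nonneg x)).2 ?_
    rintro _ ⟨y, hy, rfl⟩
    exact abs_apply_le_norm_smul_of_abs_le hT hy
  calc |S x| ≤ absS |x| := (habsS |x| (abs_nonneg x)).1 ⟨x, le_rfl, rfl⟩
    _ ≤ absT |x| := hle |x| (abs_nonneg x)
    _ ≤ ‖x‖ • t := hT_abs
    _ ≤ (2 * ‖x‖) • t := smul_le_smul_of_abs_le_norm_smul hT (by linarith [norm_nonneg x])

/-- The norm to order bounded operators form an ideal in the
regular operators: if `T` is norm to order bounded with bound `t` (i.e.
`|Tx| ≤ ‖x‖·t`), `S` is regular, and `|S| ≤ |T|` (the moduli being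
characterised by the Riesz–Kantorovich formula), then `|Sx| ≤ 2‖x‖·t`
for all `x`; in particular `S` is norm to order bounded. -/
theorem stmt_5 {E F : Type*}
    [NormedAddCommGroup E] [Lattice E] [HasSolidNorm E] [IsOrderedAddMonoid E]
    [NormedSpace ℝ E]
    [Lattice F] [AddCommGroup F] [CovariantClass F F (· + ·) (· ≤ ·)]
    [Module ℝ F]
    (hDed : ∀ A : Set F, A.Nonempty → BddAbove A → ∃ a, IsLUB A a)
    (S T absS absT : E →ₗ[ℝ] F) (t : F) (ht : 0 ≤ t)
    (hT : ∀ x : E, |T x| ≤ ‖x‖ • t)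
    (habsT : ∀ x : E, 0 ≤ x →
      IsLUB {z : F | ∃ y : E, |y| ≤ x ∧ z = |T y|} (absT x))
    (habsS : ∀ x : E, 0 ≤ x →
      IsLUB {z : F | ∃ y : E, |y| ≤ x ∧ z = |S y|} (absS x))
    (hle : ∀ x : E, 0 ≤ x → absS x ≤ absT x) :
    ∀ x : E, |S x| ≤ (2 * ‖x‖) • t :=
  stmt_5_general S T absS absT t hT habsT habsS hle
end

section
/- Let E be a normed vector lattice whose positive unit ball is upward directed, and let F be an order continuous Banach lattice. If T : E → F is norm to order bounded and t_T := sup{|T|x : x ∈ E⁺, ‖x‖ ≤ 1} (which exists in F), then the regular norm of T satisfies ‖T‖_r = ‖t_T‖. -/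
/-!
The bound `‖|T| x‖ ≤ ‖t_T‖` on the unit ball comes from `||T| x| ≤ |T| |x| ≤ t_T` and solidity of
the norm. Conversely, `{|T| x : x ≥ 0, ‖x‖ ≤ 1}` is upward directed (the positive unit ball is, and
`|T|` is positive) with supremum `t_T`, so order continuity of the norm of `F` makes `t_T - |T| x`
arbitrarily small in norm for suitable `x` in the positive unit ball.
-/

def HasOrderContinuousNorm (F : Type*) [Norm F] [Preorder F] [Zero F] : Prop :=
  ∀ A : Set F, A.Nonempty → DirectedOn (· ≥ ·) A → IsGLB A 0 → ∀ ε > 0, ∃ a ∈ A, ‖a‖ < ε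

section

variable {E F G : Type*}

theorem abs_map_le_map_abs_of_monotone [AddCommGroup E] [Lattice E] [IsOrderedAddMonoid E]
    [AddCommGroup F] [Lattice F] [IsOrderedAddMonoid F] [FunLike G E F] [AddMonoidHomClass G E F]
    {f : G} (hf : Monotone f) (x : E) : |f x| ≤ f |x| :=
  abs_le'.2 ⟨hf (le_abs_self x), map_neg f x ▸ hf (neg_le_abs x)⟩

theorem HasOrderContinuousNorm.exists_norm_sub_lt_of_isLUB [NormedAddCommGroup F] [Lattice F]
    [IsOrderedAddMonoid F] (hF : HasOrderContinuousNorm F) {S : Set F} {s : F}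
    (hne : S.Nonempty) (hdir : DirectedOn (· ≤ ·) S) (hs : IsLUB S s) {ε : ℝ} (hε : 0 < ε) :
    ∃ a ∈ S, ‖s - a‖ < ε := by
  have hglb : IsGLB ((s - ·) '' S) 0 := by
    refine ⟨?_, fun b hb => ?_⟩
    · rintro _ ⟨a, ha, rfl⟩
      exact sub_nonneg.2 (hs.1 ha)
    · have : s ≤ s - b := hs.2 fun a ha => le_sub_comm.1 (hb ⟨a, ha, rfl⟩)
      exact (le_sub_self_iff s).1 this
  obtain ⟨_, ⟨a, ha, rfl⟩, hlt⟩ := hF _ (hne.image _)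
    (hdir.mono_comp fun _ _ h => sub_le_sub_left h s) hglb ε hε
  exact ⟨a, ha, hlt⟩

theorem sSup_norm_map_eq_norm_of_isLUB [NormedAddCommGroup E] [Lattice E] [IsOrderedAddMonoid E]
    [HasSolidNorm E] [NormedAddCommGroup F] [Lattice F] [IsOrderedAddMonoid F] [HasSolidNorm F]
    [FunLike G E F] [AddMonoidHomClass G E F] (hF : HasOrderContinuousNorm F)
    (hdir : DirectedOn (· ≤ ·) {x : E | 0 ≤ x ∧ ‖x‖ ≤ 1}) {f : G} (hf : Monotone f) {s : F}
    (hs : IsLUB (f '' {x : E | 0 ≤ x ∧ ‖x‖ ≤ 1}) s) :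
    sSup {r : ℝ | ∃ x : E, ‖x‖ ≤ 1 ∧ r = ‖f x‖} = ‖s‖ := by
  have hzero : (0 : E) ∈ {x : E | 0 ≤ x ∧ ‖x‖ ≤ 1} := ⟨le_rfl, by simp⟩
  have hs0 : 0 ≤ s := map_zero f ▸ hs.1 ⟨0, hzero, rfl⟩
  refine csSup_eq_of_forall_le_of_forall_lt_exists_gt ⟨0, 0, by simp, by simp⟩ ?_ ?_
  · rintro _ ⟨x, hx, rfl⟩
    refine norm_le_norm_of_abs_le_abs ?_
    calc |f x| ≤ f |x| := abs_map_le_map_abs_of_monotone hf x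
      _ ≤ s := hs.1 ⟨|x|, ⟨abs_nonneg x, by rwa [norm_abs_eq_norm]⟩, rfl⟩
      _ = |s| := (abs_of_nonneg hs0).symm
  · intro r hr
    obtain ⟨_, ⟨x, ⟨-, hx⟩, rfl⟩, hlt⟩ := hF.exists_norm_sub_lt_of_isLUB
      (Set.Nonempty.image f ⟨0, hzero⟩) (hdir.mono_comp fun _ _ h => hf h) hs (sub_pos.2 hr)
    exact ⟨_, ⟨x, hx, rfl⟩, by linarith [norm_sub_norm_le s (f x)]⟩

end

theorem stmt_6_general {E F : Type*}
    [NormedAddCommGroup E] [Lattice E] [IsOrderedAddMonoid E] [HasSolidNorm E] [NormedSpace ℝ E]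
    [NormedAddCommGroup F] [Lattice F] [IsOrderedAddMonoid F] [HasSolidNorm F] [NormedSpace ℝ F]
    (hdir : DirectedOn (· ≤ ·) {x : E | 0 ≤ x ∧ ‖x‖ ≤ 1})
    (hoc : ∀ A : Set F, A.Nonempty → DirectedOn (· ≥ ·) A → IsGLB A 0 →
      ∀ ε > 0, ∃ a ∈ A, ‖a‖ < ε)
    (T absT : E →ₗ[ℝ] F)
    (habsT : ∀ x : E, 0 ≤ x →
      IsLUB {z : F | ∃ y : E, |y| ≤ x ∧ z = |T y|} (absT x))
    (tT : F)
    (htT : IsLUB {z : F | ∃ x : E, 0 ≤ x ∧ ‖x‖ ≤ 1 ∧ z = absT x} tT) :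
    sSup {r : ℝ | ∃ x : E, ‖x‖ ≤ 1 ∧ r = ‖absT x‖} = ‖tT‖ := by
  have hmono : Monotone absT := (monotone_iff_map_nonneg absT).2 fun x hx =>
    (habsT x hx).1 ⟨0, by simpa using hx, by simp⟩
  refine sSup_norm_map_eq_norm_of_isLUB hoc hdir hmono ?_
  convert htT using 1
  ext
  simp [eq_comm, and_assoc]

/-- Let `E` be a normed vector lattice whose positive unit ball is
upward directed and `F` an order continuous Banach lattice. If `T` is norm to
order bounded, `absT = |T|` (Riesz–Kantorovich), and
`t_T = sup {|T|x : x ∈ E⁺, ‖x‖ ≤ 1}`, then the regular norm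
`‖T‖_r = ‖|T|‖ = sup {‖|T|x‖ : ‖x‖ ≤ 1}` equals `‖t_T‖`. -/
theorem stmt_6 {E F : Type*}
    [NormedAddCommGroup E] [Lattice E] [IsOrderedAddMonoid E] [HasSolidNorm E] [NormedSpace ℝ E]
    [NormedAddCommGroup F] [Lattice F] [IsOrderedAddMonoid F] [HasSolidNorm F] [NormedSpace ℝ F] [CompleteSpace F]
    (hdir : DirectedOn (· ≤ ·) {x : E | 0 ≤ x ∧ ‖x‖ ≤ 1})
    (hoc : ∀ A : Set F, A.Nonempty → DirectedOn (· ≥ ·) A → IsGLB A 0 →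
      ∀ ε > 0, ∃ a ∈ A, ‖a‖ < ε)
    (T absT : E →ₗ[ℝ] F) (t : F) (ht0 : 0 ≤ t)
    (hT : ∀ x : E, |T x| ≤ ‖x‖ • t)
    (habsT : ∀ x : E, 0 ≤ x →
      IsLUB {z : F | ∃ y : E, |y| ≤ x ∧ z = |T y|} (absT x))
    (tT : F)
    (htT : IsLUB {z : F | ∃ x : E, 0 ≤ x ∧ ‖x‖ ≤ 1 ∧ z = absT x} tT) :
    sSup {r : ℝ | ∃ x : E, ‖x‖ ≤ 1 ∧ r = ‖absT x‖} = ‖tT‖ :=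
  stmt_6_general hdir hoc T absT habsT tT htT
end

section
/- Let (X, Ω) be a measurable space and E a Dedekind complete vector lattice. For two finite (E⁺-valued) measures μ, ν on Ω, the set map ρ(Δ) := inf{μ(Γ) + ν(Δ∖Γ) : Γ ∈ Ω, Γ ⊆ Δ} is a finite E⁺-valued measure and is the infimum of μ and ν in the cone of E̅⁺-valued measures. Moreover μ∨ν + μ∧ν = μ + ν. -/
/-!
Write `S(Δ)` for the set of sums `μ Γ + ν (Δ \ Γ)`, `Γ ⊆ Δ`. For disjoint `A`, `B` one has
`S(A ∪ B) = S(A) + S(B)`, so in an ordered group the infima add and `ρ` is finitely additive.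
As `ρ ≤ μ`, the tails `ρ (⋃ n ≥ N, Δ n)` are dominated by those of the σ-additive `μ`, which
makes `ρ` σ-additive. Any measure below `μ` and `ν` is below every element of `S(Δ)`, hence below `ρ`.
Finally `Γ ↦ Δ \ Γ` maps `S(Δ)` onto `μ Δ + ν Δ - S(Δ)`, exchanging its infimum and supremum.
-/

variable {X : Type*} [MeasurableSpace X]
variable {E : Type*} [Lattice E] [AddCommGroup E]
  [CovariantClass E E (· + ·) (· ≤ ·)]

/-- A finite `E⁺`-valued measure: a σ-additive set map into `E⁺`
vanishing at `∅`. -/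
def IsFinMeasure (μ : Set X → E) : Prop :=
  μ ∅ = 0 ∧ (∀ Δ, MeasurableSet Δ → 0 ≤ μ Δ) ∧
    ∀ Δ : ℕ → Set X, (∀ n, MeasurableSet (Δ n)) →
      Pairwise (Function.onFun Disjoint Δ) →
      IsLUB (Set.range fun N => ∑ n ∈ Finset.range N, μ (Δ n))
        (μ (⋃ n, Δ n))

/-- An `E̅⁺`-valued measure, `E̅ = WithTop E`. -/
def IsEMeasure (μ : Set X → WithTop E) : Prop :=
  μ ∅ = 0 ∧ (∀ Δ, MeasurableSet Δ → 0 ≤ μ Δ) ∧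
    ∀ Δ : ℕ → Set X, (∀ n, MeasurableSet (Δ n)) →
      Pairwise (Function.onFun Disjoint Δ) →
      IsLUB (Set.range fun N => ∑ n ∈ Finset.range N, μ (Δ n))
        (μ (⋃ n, Δ n))

open Set Function
open scoped Pointwise

section SetFunction

variable {F : Type*}

def IsFinitelyAdditive [Add F] (m : Set X → F) : Prop :=
  ∀ ⦃A B : Set X⦄, MeasurableSet A → MeasurableSet B → Disjoint A B → m (A ∪ B) = m A + m B

def IsSigmaAdditive [AddCommMonoid F] [Preorder F] (m : Set X → F) : Prop :=
  ∀ Δ : ℕ → Set X, (∀ n, MeasurableSet (Δ n)) → Pairwise (Disjoint on Δ) →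
    IsLUB (range fun N => ∑ n ∈ Finset.range N, m (Δ n)) (m (⋃ n, Δ n))

section Monoid

variable [AddCommMonoid F] {m : Set X → F}

namespace IsFinitelyAdditive

theorem eq_add_diff (hm : IsFinitelyAdditive m) {A B : Set X} (hA : MeasurableSet A)
    (hB : MeasurableSet B) (hAB : A ⊆ B) : m B = m A + m (B \ A) := by
  rw [← hm hA (hB.diff hA) disjoint_sdiff_self_right, union_sdiff_cancel hAB]

theorem biUnion_lt_eq_sum (hm : IsFinitelyAdditive m) (h0 : m ∅ = 0) {Δ : ℕ → Set X}
    (hΔ : ∀ n, MeasurableSet (Δ n)) (hdisj : Pairwise (Disjoint on Δ)) (N : ℕ) :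
    m (⋃ n, ⋃ _ : n < N, Δ n) = ∑ n ∈ Finset.range N, m (Δ n) := by
  induction N with
  | zero => simp [h0]
  | succ N ih =>
    have hd : Disjoint (⋃ n, ⋃ _ : n < N, Δ n) (Δ N) :=
      disjoint_iUnion₂_left.2 fun _ hn => hdisj hn.ne
    rw [biUnion_lt_succ, hm (.iUnion fun n => .iUnion fun _ => hΔ n) (hΔ N) hd, ih,
      Finset.sum_range_succ]

end IsFinitelyAdditive

variable [PartialOrder F] [AddLeftMono F]

theorem IsFinitelyAdditive.mono (hm : IsFinitelyAdditive m)
    (hpos : ∀ Δ, MeasurableSet Δ → 0 ≤ m Δ) {A B : Set X} (hA : MeasurableSet A)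
    (hB : MeasurableSet B) (hAB : A ⊆ B) : m A ≤ m B := by
  rw [hm.eq_add_diff hA hB hAB]
  exact le_add_of_nonneg_right (hpos _ (hB.diff hA))

theorem IsSigmaAdditive.isFinitelyAdditive (h0 : m ∅ = 0)
    (hpos : ∀ Δ, MeasurableSet Δ → 0 ≤ m Δ) (hm : IsSigmaAdditive m) :
    IsFinitelyAdditive m := by
  intro A B hA hB hAB
  let Δ : ℕ → Set X := fun n => if n = 0 then A else if n = 1 then B else ∅
  have hΔ : ∀ n, MeasurableSet (Δ n) := by
    intro n; rcases n with _ | _ | n <;> simp [Δ, hA, hB]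
  have hdisj : Pairwise (Disjoint on Δ) := by
    intro i j hij
    rcases i with _ | _ | i <;> rcases j with _ | _ | j <;> simp_all [Δ, onFun, hAB.symm]
  have hunion : ⋃ n, Δ n = A ∪ B := by
    refine Subset.antisymm (iUnion_subset fun n => ?_) (union_subset ?_ ?_)
    · rcases n with _ | _ | n <;> simp [Δ]
    · exact subset_iUnion Δ 0
    · exact subset_iUnion Δ 1
  have hsum : ∀ N, ∑ n ∈ Finset.range (N + 2), m (Δ n) = m A + m B := by
    intro N
    have htail : ∀ k, m (Δ (2 + k)) = 0 := fun k => by simp [Δ, h0, show 2 + k ≠ 1 by omega]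
    rw [add_comm, Finset.sum_range_add]
    simp only [htail, Finset.sum_const_zero, add_zero]
    simp [Δ, Finset.sum_range_succ]
  -- the partial sums increase and are eventually `m A + m B`
  have hgreatest : IsGreatest (range fun N => ∑ n ∈ Finset.range N, m (Δ n)) (m A + m B) := by
    refine ⟨⟨2, hsum 0⟩, ?_⟩
    rintro _ ⟨N, rfl⟩
    rw [← hsum N]
    exact Finset.sum_le_sum_of_subset_of_nonneg (by simp)
      fun n _ _ => hpos _ (hΔ n)
  rw [← hunion]
  exact (hm Δ hΔ hdisj).unique hgreatest.isLUB

end Monoid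

theorem IsFinitelyAdditive.isSigmaAdditive_of_le [AddCommGroup F] [PartialOrder F]
    [AddLeftMono F] {m μ : Set X → F} (hm : IsFinitelyAdditive m) (hm0 : m ∅ = 0)
    (hpos : ∀ Δ, MeasurableSet Δ → 0 ≤ m Δ) (hμ : IsFinitelyAdditive μ) (hμ0 : μ ∅ = 0)
    (hμσ : IsSigmaAdditive μ) (hle : ∀ Δ, MeasurableSet Δ → m Δ ≤ μ Δ) :
    IsSigmaAdditive m := by
  intro Δ hΔ hdisj
  set D := ⋃ n, Δ n
  set U : ℕ → Set X := fun N => ⋃ n, ⋃ _ : n < N, Δ n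
  have hD : MeasurableSet D := .iUnion hΔ
  have hU : ∀ N, MeasurableSet (U N) := fun N => .iUnion fun n => .iUnion fun _ => hΔ n
  have hUD : ∀ N, U N ⊆ D := fun N => iUnion₂_subset fun n _ => subset_iUnion Δ n
  refine ⟨?_, fun b hb => ?_⟩
  · rintro _ ⟨N, rfl⟩
    dsimp only
    rw [← hm.biUnion_lt_eq_sum hm0 hΔ hdisj]
    exact hm.mono hpos (hU N) hD (hUD N)
  -- `μ (U N) ≤ μ D + b - m D` for every `N`, so by σ-additivity also `μ D ≤ μ D + b - m D`
  suffices μ D ≤ μ D + b - m D from le_of_add_le_add_left (le_sub_iff_add_le.1 this)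
  refine (hμσ Δ hΔ hdisj).2 ?_
  rintro _ ⟨N, rfl⟩
  dsimp only
  rw [← hμ.biUnion_lt_eq_sum hμ0 hΔ hdisj N, le_sub_iff_add_le]
  calc μ (U N) + m D = μ (U N) + (m (U N) + m (D \ U N)) := by
        rw [← hm.eq_add_diff (hU N) hD (hUD N)]
    _ ≤ μ (U N) + (b + μ (D \ U N)) := by
        gcongr
        · rw [hm.biUnion_lt_eq_sum hm0 hΔ hdisj]
          exact hb ⟨N, rfl⟩
        · exact hle _ (hD.diff (hU N))
    _ = μ D + b := by
        rw [hμ.eq_add_diff (hU N) hD (hUD N)]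
        abel

end SetFunction

theorem IsFinMeasure.isFinitelyAdditive {μ : Set X → E} (hμ : IsFinMeasure μ) :
    IsFinitelyAdditive μ :=
  IsSigmaAdditive.isFinitelyAdditive hμ.1 hμ.2.1 hμ.2.2

theorem IsEMeasure.isFinitelyAdditive {σ : Set X → WithTop E} (hσ : IsEMeasure σ) :
    IsFinitelyAdditive σ :=
  IsSigmaAdditive.isFinitelyAdditive hσ.1 hσ.2.1 hσ.2.2

section SplitSums

variable {F : Type*}

def splitSums [Add F] (μ ν : Set X → F) (Δ : Set X) : Set F :=
  {z | ∃ Γ, MeasurableSet Γ ∧ Γ ⊆ Δ ∧ z = μ Γ + ν (Δ \ Γ)}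

section Monoid

variable [AddCommMonoid F] {μ ν : Set X → F} {Δ : Set X}

theorem mem_splitSums_self_left (hν0 : ν ∅ = 0) (hΔ : MeasurableSet Δ) :
    μ Δ ∈ splitSums μ ν Δ :=
  ⟨Δ, hΔ, subset_rfl, by rw [sdiff_self, hν0, add_zero]⟩

theorem mem_splitSums_self_right (hμ0 : μ ∅ = 0) :
    ν Δ ∈ splitSums μ ν Δ :=
  ⟨∅, .empty, empty_subset Δ, by rw [sdiff_empty, hμ0, zero_add]⟩

theorem nonneg_of_mem_splitSums [PartialOrder F] [AddLeftMono F]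
    (hμpos : ∀ Δ, MeasurableSet Δ → 0 ≤ μ Δ) (hνpos : ∀ Δ, MeasurableSet Δ → 0 ≤ ν Δ)
    (hΔ : MeasurableSet Δ) {z : F} (hz : z ∈ splitSums μ ν Δ) : 0 ≤ z := by
  obtain ⟨Γ, hΓ, -, rfl⟩ := hz
  exact add_nonneg (hμpos Γ hΓ) (hνpos _ (hΔ.diff hΓ))

theorem splitSums_union (hμ : IsFinitelyAdditive μ) (hν : IsFinitelyAdditive ν)
    {A B : Set X} (hA : MeasurableSet A) (hB : MeasurableSet B) (hAB : Disjoint A B) :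
    splitSums μ ν (A ∪ B) = splitSums μ ν A + splitSums μ ν B := by
  ext z
  constructor
  · rintro ⟨Γ, hΓ, hΓAB, rfl⟩
    refine ⟨_, ⟨Γ ∩ A, hΓ.inter hA, inter_subset_right, rfl⟩,
      _, ⟨Γ ∩ B, hΓ.inter hB, inter_subset_right, rfl⟩, ?_⟩
    dsimp only
    rw [sdiff_inter_self_eq_sdiff, sdiff_inter_self_eq_sdiff, add_add_add_comm,
      ← hμ (hΓ.inter hA) (hΓ.inter hB) (hAB.mono inter_subset_right inter_subset_right),
      ← inter_union_distrib_left, inter_eq_left.2 hΓAB,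
      ← hν (hA.diff hΓ) (hB.diff hΓ) (hAB.mono sdiff_subset sdiff_subset), union_sdiff_distrib]
  · rw [mem_add]
    rintro ⟨_, ⟨Γ, hΓ, hΓA, rfl⟩, _, ⟨Γ', hΓ', hΓ'B, rfl⟩, rfl⟩
    refine ⟨Γ ∪ Γ', hΓ.union hΓ', union_subset_union hΓA hΓ'B, ?_⟩
    have hdiff : (A ∪ B) \ (Γ ∪ Γ') = A \ Γ ∪ B \ Γ' := by
      ext x
      have := @hΓA x
      have := @hΓ'B x
      have := @disjoint_left.1 hAB x
      simp only [mem_union, mem_sdiff]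
      tauto
    rw [hμ hΓ hΓ' (hAB.mono hΓA hΓ'B), hdiff,
      hν (hA.diff hΓ) (hB.diff hΓ') (hAB.mono sdiff_subset sdiff_subset), add_add_add_comm]

end Monoid

section Group

variable [AddCommGroup F] {μ ν : Set X → F} {Δ : Set X}

theorem singleton_sub_splitSums (hμ : IsFinitelyAdditive μ) (hν : IsFinitelyAdditive ν)
    (hΔ : MeasurableSet Δ) : {μ Δ + ν Δ} - splitSums μ ν Δ = splitSums μ ν Δ := by
  have hswap : ∀ z ∈ splitSums μ ν Δ, μ Δ + ν Δ - z ∈ splitSums μ ν Δ := by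
    rintro _ ⟨Γ, hΓ, hΓΔ, rfl⟩
    refine ⟨Δ \ Γ, hΔ.diff hΓ, sdiff_subset, ?_⟩
    rw [sdiff_sdiff_cancel_left hΓΔ, hμ.eq_add_diff hΓ hΔ hΓΔ, hν.eq_add_diff hΓ hΔ hΓΔ]
    abel
  rw [singleton_sub]
  exact Subset.antisymm (image_subset_iff.2 hswap) fun z hz =>
    ⟨_, hswap z hz, sub_sub_cancel _ _⟩

variable [PartialOrder F] [AddLeftMono F] {ρ : Set X → F}

theorem isLUB_splitSums (hμ : IsFinitelyAdditive μ) (hν : IsFinitelyAdditive ν)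
    (hΔ : MeasurableSet Δ) {r : F} (hr : IsGLB (splitSums μ ν Δ) r) :
    IsLUB (splitSums μ ν Δ) (μ Δ + ν Δ - r) := by
  have := (isLUB_singleton (a := μ Δ + ν Δ)).sub hr
  rwa [singleton_sub_splitSums hμ hν hΔ] at this

theorem isFinitelyAdditive_of_isGLB_splitSums (hμ : IsFinitelyAdditive μ)
    (hν : IsFinitelyAdditive ν) (hρ : ∀ Δ, MeasurableSet Δ → IsGLB (splitSums μ ν Δ) (ρ Δ)) :
    IsFinitelyAdditive ρ := fun A B hA hB hAB =>
  (hρ _ (hA.union hB)).unique (splitSums_union hμ hν hA hB hAB ▸ (hρ A hA).add (hρ B hB))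

end Group

end SplitSums

section Infimum

variable {μ ν ρ : Set X → E}

theorem isFinMeasure_of_isGLB_splitSums (hμ : IsFinMeasure μ) (hν : IsFinMeasure ν)
    (hρ : ∀ Δ, MeasurableSet Δ → IsGLB (splitSums μ ν Δ) (ρ Δ)) : IsFinMeasure ρ := by
  have ⟨hμ0, hμpos, hμσ⟩ := hμ
  have ⟨hν0, hνpos, _⟩ := hν
  have hρpos : ∀ Δ, MeasurableSet Δ → 0 ≤ ρ Δ := fun Δ hΔ =>
    (hρ Δ hΔ).2 fun _ => nonneg_of_mem_splitSums hμpos hνpos hΔ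
  have hρleμ : ∀ Δ, MeasurableSet Δ → ρ Δ ≤ μ Δ := fun Δ hΔ =>
    (hρ Δ hΔ).1 (mem_splitSums_self_left hν0 hΔ)
  have hρ0 : ρ ∅ = 0 := le_antisymm (hμ0 ▸ hρleμ ∅ .empty) (hρpos ∅ .empty)
  have hρadd :=
    isFinitelyAdditive_of_isGLB_splitSums hμ.isFinitelyAdditive hν.isFinitelyAdditive hρ
  exact ⟨hρ0, hρpos, hρadd.isSigmaAdditive_of_le hρ0 hρpos hμ.isFinitelyAdditive hμ0 hμσ hρleμ⟩

theorem IsEMeasure.le_of_isGLB_splitSums {σ : Set X → WithTop E} (hσ : IsEMeasure σ)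
    (hσμ : ∀ Δ, MeasurableSet Δ → σ Δ ≤ μ Δ) (hσν : ∀ Δ, MeasurableSet Δ → σ Δ ≤ ν Δ)
    {Δ : Set X} (hΔ : MeasurableSet Δ) {r : E} (hr : IsGLB (splitSums μ ν Δ) r) : σ Δ ≤ r := by
  have hσΔ : σ Δ ≠ ⊤ := ne_top_of_le_ne_top WithTop.coe_ne_top (hσμ Δ hΔ)
  lift σ Δ to E using hσΔ with s hs
  refine WithTop.coe_le_coe.2 (hr.2 ?_)
  rintro _ ⟨Γ, hΓ, hΓΔ, rfl⟩
  rw [← WithTop.coe_le_coe, hs, hσ.isFinitelyAdditive.eq_add_diff hΓ hΔ hΓΔ, WithTop.coe_add]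
  exact add_le_add (hσμ Γ hΓ) (hσν _ (hΔ.diff hΓ))

end Infimum

theorem stmt_11_general (μ ν : Set X → E) (hμ : IsFinMeasure μ) (hν : IsFinMeasure ν)
    (ρ : Set X → E)
    (hρ : ∀ Δ, MeasurableSet Δ →
      IsGLB {z : E | ∃ Γ, MeasurableSet Γ ∧ Γ ⊆ Δ ∧ z = μ Γ + ν (Δ \ Γ)}
        (ρ Δ))
    (ξ : Set X → E)
    (hξ : ∀ Δ, MeasurableSet Δ →
      IsLUB {z : E | ∃ Γ, MeasurableSet Γ ∧ Γ ⊆ Δ ∧ z = μ Γ + ν (Δ \ Γ)}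
        (ξ Δ)) :
    IsFinMeasure ρ ∧
      (∀ Δ, MeasurableSet Δ → ρ Δ ≤ μ Δ ∧ ρ Δ ≤ ν Δ) ∧
      (∀ σ : Set X → WithTop E, IsEMeasure σ →
        (∀ Δ, MeasurableSet Δ → σ Δ ≤ (μ Δ : WithTop E)) →
        (∀ Δ, MeasurableSet Δ → σ Δ ≤ (ν Δ : WithTop E)) →
        ∀ Δ, MeasurableSet Δ → σ Δ ≤ (ρ Δ : WithTop E)) ∧
      ∀ Δ, MeasurableSet Δ → ξ Δ + ρ Δ = μ Δ + ν Δ := by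
  refine ⟨isFinMeasure_of_isGLB_splitSums hμ hν hρ,
    fun Δ hΔ => ⟨(hρ Δ hΔ).1 (mem_splitSums_self_left hν.1 hΔ),
      (hρ Δ hΔ).1 (mem_splitSums_self_right hμ.1)⟩,
    fun σ hσ hσμ hσν Δ hΔ => hσ.le_of_isGLB_splitSums hσμ hσν hΔ (hρ Δ hΔ),
    fun Δ hΔ => ?_⟩
  have hsup := isLUB_splitSums hμ.isFinitelyAdditive hν.isFinitelyAdditive hΔ (hρ Δ hΔ)
  rw [(hξ Δ hΔ).unique hsup, sub_add_cancel]

/-- for finite `E⁺`-valued measures `μ, ν`, the set map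
`ρ(Δ) = inf {μ(Γ) + ν(Δ∖Γ) : Γ measurable ⊆ Δ}` is a finite `E⁺`-valued
measure and is the infimum of `μ` and `ν` in the cone of `E̅⁺`-valued
measures; moreover `μ∨ν + μ∧ν = μ + ν`, where `μ∨ν` is given by the
corresponding supremum formula. -/
theorem stmt_11 (hDed : ∀ T : Set E, T.Nonempty → BddAbove T → ∃ a, IsLUB T a)
    (μ ν : Set X → E) (hμ : IsFinMeasure μ) (hν : IsFinMeasure ν)
    (ρ : Set X → E)
    (hρ : ∀ Δ, MeasurableSet Δ →
      IsGLB {z : E | ∃ Γ, MeasurableSet Γ ∧ Γ ⊆ Δ ∧ z = μ Γ + ν (Δ \ Γ)}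
        (ρ Δ))
    (ξ : Set X → E)
    (hξ : ∀ Δ, MeasurableSet Δ →
      IsLUB {z : E | ∃ Γ, MeasurableSet Γ ∧ Γ ⊆ Δ ∧ z = μ Γ + ν (Δ \ Γ)}
        (ξ Δ)) :
    IsFinMeasure ρ ∧
      (∀ Δ, MeasurableSet Δ → ρ Δ ≤ μ Δ ∧ ρ Δ ≤ ν Δ) ∧
      (∀ σ : Set X → WithTop E, IsEMeasure σ →
        (∀ Δ, MeasurableSet Δ → σ Δ ≤ (μ Δ : WithTop E)) →
        (∀ Δ, MeasurableSet Δ → σ Δ ≤ (ν Δ : WithTop E)) →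
        ∀ Δ, MeasurableSet Δ → σ Δ ≤ (ρ Δ : WithTop E)) ∧
      ∀ Δ, MeasurableSet Δ → ξ Δ + ρ Δ = μ Δ + ν Δ :=
  stmt_11_general μ ν hμ hν ρ hρ ξ hξ
end

section
/- Let (X,Ω) be a measurable space and E a Dedekind complete vector lattice. If (μ_λ) is an increasing net of E̅⁺-valued measures on Ω, then the set map μ defined by μ(Δ) := sup_λ μ_λ(Δ) (supremum in E̅⁺) is an E̅⁺-valued measure, and μ_λ ↑ μ in the cone of E̅⁺-valued measures. -/
/-!
Suprema of increasing nets in `E̅⁺ = WithTop E` are additive: if `c` bounds every `f i + g j`,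
then translating by the finite value `g j` gives `sup f + g j ≤ c`, and translating once more
gives `sup f + sup g ≤ c`. Hence the partial sums `∑_{n<N} μ(Δₙ)` are the suprema over `λ` of
the partial sums of `μ_λ`, and σ-additivity of `μ` becomes the interchange of the suprema over
`λ` and over `N`.
-/

variable {X : Type*} [MeasurableSpace X]
variable {E : Type*} [Lattice E] [AddCommGroup E]
  [CovariantClass E E (· + ·) (· ≤ ·)]

open Set

theorem isLUB_range_comm {α : Type*} [Preorder α] {ι κ : Sort*} {F : ι → κ → α}
    {u : ι → α} {v : κ → α} {s : α}
    (hu : ∀ i, IsLUB (range (F i)) (u i)) (hv : ∀ k, IsLUB (range fun i => F i k) (v k))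
    (hs : IsLUB (range u) s) : IsLUB (range v) s := by
  refine ⟨?_, fun b hb => hs.2 ?_⟩
  · rintro _ ⟨k, rfl⟩
    exact (hv k).2 <| forall_mem_range.2 fun i =>
      ((hu i).1 (mem_range_self k)).trans (hs.1 (mem_range_self i))
  · rintro _ ⟨i, rfl⟩
    exact (hu i).2 <| forall_mem_range.2 fun k =>
      ((hv k).1 (mem_range_self i)).trans (hb (mem_range_self k))

namespace WithTop

variable {α : Type*} [AddCommGroup α] [PartialOrder α] [AddLeftMono α]

theorem isLUB_range_add_coe {ι : Sort*} {f : ι → WithTop α} {a : WithTop α}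
    (hf : IsLUB (range f) a) (x : α) : IsLUB (range fun i => f i + x) (a + x) := by
  refine ⟨forall_mem_range.2 fun i => add_le_add_left (hf.1 (mem_range_self i)) _, ?_⟩
  intro c hc
  induction c with
  | top => exact le_top
  | coe c =>
    have hsub (y : WithTop α) : y + x ≤ c ↔ y ≤ ↑(c - x) := by
      simpa only [← coe_add, sub_add_cancel] using
        WithTop.add_le_add_iff_right (x := y) (y := ↑(c - x)) (coe_ne_top (a := x))
    exact (hsub a).2 <| hf.2 <| forall_mem_range.2 fun i => (hsub _).1 (hc (mem_range_self i))

theorem isLUB_range_add {ι : Type*} [Preorder ι] [IsDirected ι (· ≤ ·)] [Nonempty ι]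
    {f g : ι → WithTop α} {a b : WithTop α} (hf : Monotone f) (hg : Monotone g)
    (ha : IsLUB (range f) a) (hb : IsLUB (range g) b) :
    IsLUB (range fun i => f i + g i) (a + b) := by
  refine ⟨forall_mem_range.2 fun i =>
    add_le_add (ha.1 (mem_range_self i)) (hb.1 (mem_range_self i)), fun c hc => ?_⟩
  induction c with
  | top => exact le_top
  | coe c =>
    have hmix (i j : ι) : f i + g j ≤ c := by
      obtain ⟨k, hik, hjk⟩ := directed_of (· ≤ ·) i j
      exact (add_le_add (hf hik) (hg hjk)).trans (hc (mem_range_self k))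
    have hg_ne (j : ι) : g j ≠ ⊤ :=
      (add_ne_top.1 (ne_top_of_le_ne_top coe_ne_top (hmix j j))).2
    have hag (j : ι) : a + g j ≤ c := by
      lift g j to α using hg_ne j with y hy
      exact (isLUB_range_add_coe ha y).2 (forall_mem_range.2 fun i => hy ▸ hmix i j)
    obtain ⟨j⟩ := ‹Nonempty ι›
    lift a to α using (add_ne_top.1 (ne_top_of_le_ne_top coe_ne_top (hag j))).1
    rw [add_comm]
    exact (isLUB_range_add_coe hb a).2
      (forall_mem_range.2 fun j => add_comm (a : WithTop α) (g j) ▸ hag j)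

theorem isLUB_range_sum {ι κ : Type*} [Preorder ι] [IsDirected ι (· ≤ ·)] [Nonempty ι]
    {F : κ → ι → WithTop α} {a : κ → WithTop α} (hF : ∀ k, Monotone (F k))
    (ha : ∀ k, IsLUB (range (F k)) (a k)) (s : Finset κ) :
    IsLUB (range fun i => ∑ k ∈ s, F k i) (∑ k ∈ s, a k) := by
  classical
  induction s using Finset.induction_on with
  | empty => simpa only [Finset.sum_empty, range_const] using isLUB_singleton
  | insert k s hk ih =>
    simp only [Finset.sum_insert hk]
    exact isLUB_range_add (hF k) (fun i j hij => Finset.sum_le_sum fun k _ => hF k hij) (ha k) ih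

end WithTop

theorem isEMeasure_of_isLUB {ι : Type*} [Preorder ι] [IsDirected ι (· ≤ ·)] [Nonempty ι]
    {μnet : ι → Set X → WithTop E} (hmeas : ∀ i, IsEMeasure (μnet i))
    (hmono : ∀ i j, i ≤ j → ∀ Δ, MeasurableSet Δ → μnet i Δ ≤ μnet j Δ)
    {μ : Set X → WithTop E}
    (hμ : ∀ Δ, MeasurableSet Δ → IsLUB (range fun i => μnet i Δ) (μ Δ)) :
    IsEMeasure μ := by
  refine ⟨?_, fun Δ hΔ => ?_, fun Δ hΔ hdisj => ?_⟩
  · have h := hμ ∅ MeasurableSet.empty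
    simp only [fun i => (hmeas i).1, range_const] at h
    exact h.unique isLUB_singleton
  · obtain ⟨i⟩ := ‹Nonempty ι›
    exact ((hmeas i).2.1 Δ hΔ).trans ((hμ Δ hΔ).1 (mem_range_self i))
  · exact isLUB_range_comm (fun i => (hmeas i).2.2 Δ hΔ hdisj)
      (fun N => WithTop.isLUB_range_sum (F := fun n i => μnet i (Δ n))
        (fun n i j hij => hmono i j hij _ (hΔ n)) (fun n => hμ _ (hΔ n)) (Finset.range N))
      (hμ _ (MeasurableSet.iUnion hΔ))

theorem stmt_13_general {ι : Type*} [SemilatticeSup ι] [Nonempty ι]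
    (μnet : ι → Set X → WithTop E)
    (hmeas : ∀ i, IsEMeasure (μnet i))
    (hmono : ∀ i j, i ≤ j → ∀ Δ, MeasurableSet Δ → μnet i Δ ≤ μnet j Δ)
    (μ : Set X → WithTop E)
    (hμ : ∀ Δ, MeasurableSet Δ →
      IsLUB (Set.range fun i => μnet i Δ) (μ Δ)) :
    IsEMeasure μ ∧
      (∀ i, ∀ Δ, MeasurableSet Δ → μnet i Δ ≤ μ Δ) ∧
      ∀ σ : Set X → WithTop E, IsEMeasure σ →
        (∀ i, ∀ Δ, MeasurableSet Δ → μnet i Δ ≤ σ Δ) →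
        ∀ Δ, MeasurableSet Δ → μ Δ ≤ σ Δ :=
  ⟨isEMeasure_of_isLUB hmeas hmono hμ, fun i Δ hΔ => (hμ Δ hΔ).1 (mem_range_self i),
    fun _ _ hσ Δ hΔ => (hμ Δ hΔ).2 (forall_mem_range.2 fun i => hσ i Δ hΔ)⟩

/-- if `(μ_λ)` is an increasing net of `E̅⁺`-valued measures and
`μ(Δ) := sup_λ μ_λ(Δ)`, then `μ` is an `E̅⁺`-valued measure and `μ_λ ↑ μ` in
the pointwise order on the cone of `E̅⁺`-valued measures. -/
theorem stmt_13 (hDed : ∀ T : Set E, T.Nonempty → BddAbove T → ∃ a, IsLUB T a)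
    {ι : Type*} [SemilatticeSup ι] [Nonempty ι]
    (μnet : ι → Set X → WithTop E)
    (hmeas : ∀ i, IsEMeasure (μnet i))
    (hmono : ∀ i j, i ≤ j → ∀ Δ, MeasurableSet Δ → μnet i Δ ≤ μnet j Δ)
    (μ : Set X → WithTop E)
    (hμ : ∀ Δ, MeasurableSet Δ →
      IsLUB (Set.range fun i => μnet i Δ) (μ Δ)) :
    IsEMeasure μ ∧
      (∀ i, ∀ Δ, MeasurableSet Δ → μnet i Δ ≤ μ Δ) ∧
      ∀ σ : Set X → WithTop E, IsEMeasure σ →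
        (∀ i, ∀ Δ, MeasurableSet Δ → μnet i Δ ≤ σ Δ) →
        ∀ Δ, MeasurableSet Δ → μ Δ ≤ σ Δ :=
  stmt_13_general μnet hmeas hmono μ hμ
end

section
/- Let S be a nonempty set, E a Dedekind complete vector lattice, s ∈ S and S′ ⊆ S nonempty. Suppose μ, ν : S′ ∪ {s} → E satisfy (a) ν(s′) ≤ ν(s) and (μ−ν)(s′) ≤ (μ−ν)(s) for all s′ ∈ S′, and (b) μ(s) = sup_{s′∈S′} μ(s′). Then ν(s) = sup_{s′∈S′} ν(s′). -/
/-- Let `E` be a Dedekind complete vector lattice, `s ∈ S`,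
`S′ ⊆ S` nonempty, and `μ, ν : S′ ∪ {s} → E` with `ν(s′) ≤ ν(s)` and
`(μ−ν)(s′) ≤ (μ−ν)(s)` for all `s′ ∈ S′`, and `μ(s) = sup_{s′∈S′} μ(s′)`.
Then `ν(s) = sup_{s′∈S′} ν(s′)`. -/
theorem stmt_14 {E : Type*} [Lattice E] [AddCommGroup E]
    [CovariantClass E E (· + ·) (· ≤ ·)]
    (hDed : ∀ T : Set E, T.Nonempty → BddAbove T → ∃ a, IsLUB T a)
    {S : Type*} (s : S) (S' : Set S) (hS' : S'.Nonempty)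
    (μ ν : S → E)
    (ha : ∀ s' ∈ S', ν s' ≤ ν s ∧ μ s' - ν s' ≤ μ s - ν s)
    (hb : IsLUB (μ '' S') (μ s)) :
    IsLUB (ν '' S') (ν s) := by
  constructor
  · rintro x ⟨t, ht, rfl⟩
    exact (ha t ht).1
  · intro b hb'
    have h : μ s ≤ (μ s - ν s) + b := by
      apply hb.2
      rintro x ⟨t, ht, rfl⟩
      have h1 := (ha t ht).2
      have h2 : ν t ≤ b := hb' ⟨t, ht, rfl⟩
      calc μ t = (μ t - ν t) + ν t := by abel
        _ ≤ (μ s - ν s) + b := add_le_add h1 h2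
    have h3 := sub_le_sub_right h (μ s - ν s)
    calc ν s = μ s - (μ s - ν s) := by abel
      _ ≤ (μ s - ν s) + b - (μ s - ν s) := h3
      _ = b := by abel
end

section
/- Let X be a locally compact Hausdorff space with Borel σ-algebra B, and E a Dedekind complete vector lattice. If μ, ν are E̅⁺-valued Borel measures with ν ≤ μ, Δ ∈ B has μ(Δ) finite, and μ is inner regular at Δ (μ(Δ) = sup{μ(K) : K compact, K ⊆ Δ}), then ν is inner regular at Δ. -/
variable {X : Type*} [TopologicalSpace X] [LocallyCompactSpace X] [T2Space X]
  [MeasurableSpace X] [BorelSpace X]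
variable {E : Type*} [Lattice E] [AddCommGroup E]
  [CovariantClass E E (· + ·) (· ≤ ·)]

/-!
For a compact `K ⊆ Δ`, splitting `Δ = K ∪ (Δ \ K)` and using `ν ≤ μ` on `Δ \ K` gives
`μ K + ν Δ ≤ ν K + μ Δ`. If `b` bounds every `ν K`, then `μ K ≤ b + μ Δ - ν Δ` for all such `K`;
inner regularity of `μ` turns this into `μ Δ + ν Δ ≤ b + μ Δ`, and `μ Δ` is finite, so it cancels.
-/

open Function

theorem WithTop.le_of_isLUB_of_forall_add_le {G : Type*} [AddCommGroup G] [PartialOrder G]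
    [IsOrderedAddMonoid G] {S : Set (WithTop G)} {a b c : WithTop G} (hS : IsLUB S a)
    (ha : a ≠ ⊤) (hc : c ≠ ⊤) (h : ∀ x ∈ S, x + c ≤ b + a) : c ≤ b := by
  lift c to G using hc
  have hcancel : ∀ y : WithTop G, y + c + ↑(-c) = y := fun y => by
    rw [add_assoc, ← WithTop.coe_add, add_neg_cancel, WithTop.coe_zero, add_zero]
  have haS : a ≤ b + a + ↑(-c) := hS.2 fun x hx => by
    simpa only [hcancel] using add_le_add_left (h x hx) ((-c : G) : WithTop G)
  refine (WithTop.add_le_add_iff_right ha).1 ?_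
  calc ↑c + a = a + ↑c := add_comm _ _
    _ ≤ b + a + ↑(-c) + ↑c := add_le_add_left haS _
    _ = b + a := by rw [add_assoc, ← WithTop.coe_add, neg_add_cancel, WithTop.coe_zero, add_zero]

section
variable {α G : Type*} [MeasurableSpace α] [Lattice G] [AddCommGroup G] [IsOrderedAddMonoid G]
  {μ ν : Set α → WithTop G}

theorem IsEMeasure.iUnion_eq_sum_range (hμ : IsEMeasure μ) {s : ℕ → Set α}
    (hs : ∀ n, MeasurableSet (s n)) (hd : Pairwise (Disjoint on s)) {N : ℕ}
    (hN : ∀ n ≥ N, s n = ∅) : μ (⋃ n, s n) = ∑ n ∈ Finset.range N, μ (s n) := by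
  refine (hμ.2.2 s hs hd).unique (IsGreatest.isLUB ⟨⟨N, rfl⟩, ?_⟩)
  rintro _ ⟨M, rfl⟩
  rcases le_total N M with hNM | hMN
  · exact (Finset.eventually_constant_sum (fun n hn => by rw [hN n hn, hμ.1]) hNM).le
  · exact Finset.sum_le_sum_of_subset_of_nonneg (Finset.range_subset_range.2 hMN)
      fun n _ _ => hμ.2.1 _ (hs n)

theorem IsEMeasure.union_eq (hμ : IsEMeasure μ) {A B : Set α} (hA : MeasurableSet A)
    (hB : MeasurableSet B) (hAB : Disjoint A B) : μ (A ∪ B) = μ A + μ B := by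
  set s : ℕ → Set α := fun n => if n = 0 then A else if n = 1 then B else ∅
  have hU : A ∪ B = ⋃ n, s n := by
    ext x
    simp only [Set.mem_union, Set.mem_iUnion, s]
    refine ⟨?_, ?_⟩
    · rintro (h | h)
      exacts [⟨0, by simpa⟩, ⟨1, by simpa⟩]
    · rintro ⟨_ | _ | n, h⟩ <;> simp_all
  have hs : ∀ n, MeasurableSet (s n) := by
    rintro (_ | _ | n) <;> simp [s, hA, hB]
  have hd : Pairwise (Disjoint on s) := by
    rintro (_ | _ | i) (_ | _ | j) hij <;> simp_all [s, onFun, hAB.symm]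
  have hN : ∀ n ≥ 2, s n = ∅ := fun n hn => by
    simp [s, show n ≠ 0 by omega, show n ≠ 1 by omega]
  rw [hU, hμ.iUnion_eq_sum_range hs hd hN]
  simp [Finset.sum_range_succ, s]

theorem IsEMeasure.eq_add_diff (hμ : IsEMeasure μ) {A B : Set α} (hA : MeasurableSet A)
    (hB : MeasurableSet B) (hAB : A ⊆ B) : μ B = μ A + μ (B \ A) := by
  rw [← hμ.union_eq hA (hB.diff hA) Set.disjoint_sdiff_right, Set.union_sdiff_cancel hAB]

theorem IsEMeasure.mono (hμ : IsEMeasure μ) {A B : Set α} (hA : MeasurableSet A)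
    (hB : MeasurableSet B) (hAB : A ⊆ B) : μ A ≤ μ B := by
  rw [hμ.eq_add_diff hA hB hAB]
  exact le_add_of_nonneg_right (hμ.2.1 _ (hB.diff hA))

theorem IsEMeasure.add_le_add_of_subset (hμ : IsEMeasure μ) (hν : IsEMeasure ν)
    (hle : ∀ s, MeasurableSet s → ν s ≤ μ s) {A B : Set α} (hA : MeasurableSet A)
    (hB : MeasurableSet B) (hAB : A ⊆ B) : μ A + ν B ≤ ν A + μ B := by
  rw [hμ.eq_add_diff hA hB hAB, hν.eq_add_diff hA hB hAB, add_left_comm (μ A)]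
  gcongr
  exact hle _ (hB.diff hA)

end

theorem stmt_15_general
    (μ ν : Set X → WithTop E) (hμ : IsEMeasure μ) (hν : IsEMeasure ν)
    (hle : ∀ Δ, MeasurableSet Δ → ν Δ ≤ μ Δ)
    (Δ : Set X) (hΔ : MeasurableSet Δ) (hfin : μ Δ ≠ ⊤)
    (hinner : IsLUB {z : WithTop E | ∃ K, IsCompact K ∧ K ⊆ Δ ∧ z = μ K}
      (μ Δ)) :
    IsLUB {z : WithTop E | ∃ K, IsCompact K ∧ K ⊆ Δ ∧ z = ν K} (ν Δ) := by
  have : IsOrderedAddMonoid E := { add_le_add_left := fun _ _ h c => add_le_add_left h c }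
  refine ⟨?_, fun b hb => ?_⟩
  · rintro _ ⟨K, hK, hKΔ, rfl⟩
    exact hν.mono hK.measurableSet hΔ hKΔ
  refine WithTop.le_of_isLUB_of_forall_add_le hinner hfin
    (ne_top_of_le_ne_top hfin (hle Δ hΔ)) ?_
  rintro _ ⟨K, hK, hKΔ, rfl⟩
  calc μ K + ν Δ ≤ ν K + μ Δ := hμ.add_le_add_of_subset hν hle hK.measurableSet hΔ hKΔ
    _ ≤ b + μ Δ := add_le_add_left (hb ⟨K, hK, hKΔ, rfl⟩) _

/-- if `ν ≤ μ` are `E̅⁺`-valued Borel measures on a locally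
compact Hausdorff space, `μ(Δ)` is finite, and `μ` is inner regular at the
Borel set `Δ`, then `ν` is inner regular at `Δ`. -/
theorem stmt_15 (hDed : ∀ T : Set E, T.Nonempty → BddAbove T → ∃ a, IsLUB T a)
    (μ ν : Set X → WithTop E) (hμ : IsEMeasure μ) (hν : IsEMeasure ν)
    (hle : ∀ Δ, MeasurableSet Δ → ν Δ ≤ μ Δ)
    (Δ : Set X) (hΔ : MeasurableSet Δ) (hfin : μ Δ ≠ ⊤)
    (hinner : IsLUB {z : WithTop E | ∃ K, IsCompact K ∧ K ⊆ Δ ∧ z = μ K}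
      (μ Δ)) :
    IsLUB {z : WithTop E | ∃ K, IsCompact K ∧ K ⊆ Δ ∧ z = ν K} (ν Δ) :=
  stmt_15_general μ ν hμ hν hle Δ hΔ hfin hinner
end

section
/- Let (X,Ω) be a measurable space and E a Dedekind complete vector lattice. The span M(X,Ω,E) of the finite E⁺-valued measures inside the E-valued set maps, ordered pointwise, is a Dedekind complete vector lattice whose positive cone is exactly the set of finite E⁺-valued measures; in particular, if μ, ν are finite E⁺-valued measures and μ − ν ≥ 0 pointwise, then μ − ν is σ-additive. -/
variable {X : Type*} [MeasurableSpace X]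
variable {E : Type*} [Lattice E] [AddCommGroup E]
  [CovariantClass E E (· + ·) (· ≤ ·)]

/-- Membership in `M(X,Ω,E)`, the span of the finite `E⁺`-valued measures:
a difference of two finite `E⁺`-valued measures (on the σ-algebra). -/
def InSpanMeasures (μ : Set X → E) : Prop :=
  ∃ μ₁ μ₂ : Set X → E, IsFinMeasure μ₁ ∧ IsFinMeasure μ₂ ∧
    ∀ Δ, MeasurableSet Δ → μ Δ = μ₁ Δ - μ₂ Δ

/-- The pointwise order on `M(X,Ω,E)` (over the σ-algebra). -/
def MeasLE (μ ν : Set X → E) : Prop :=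
  ∀ Δ, MeasurableSet Δ → μ Δ ≤ ν Δ

/-!
A set function that vanishes at `∅`, is nonnegative and superadditive, and whose value on a
countable disjoint union lies below every upper bound of the partial sums, is a finite measure.
This criterion gives, in turn: `μ - ν` is a finite measure when `ν ≤ μ` (so the positive cone of
the span consists of finite measures); the Riesz–Kantorovich formula
`(α ⊔ β) Δ = sup {α A + β (Δ \ A) | A ⊆ Δ}` defines a finite measure, and binary suprema in the
span are obtained from it after shifting both arguments by a common finite measure; and a
pointwise supremum of an upward directed family of finite measures is a finite measure. For a
bounded set `𝒮 ∋ μ₀`, the finite measures `θ` with `μ₀ + θ` below every upper bound of `𝒮` form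
such a family, directed by binary suprema, and `μ₀ + sup θ` is the supremum of `𝒮`.
-/

open Set Function

theorem isLUB_range_add_of_monotone {ι G : Type*} [Preorder ι] [IsDirected ι (· ≤ ·)]
    [AddCommGroup G] [Preorder G] [AddLeftMono G] {f g : ι → G} {a b : G}
    (hf : Monotone f) (hg : Monotone g) (ha : IsLUB (range f) a) (hb : IsLUB (range g) b) :
    IsLUB (range fun i => f i + g i) (a + b) := by
  have hab := ha.add hb
  refine ⟨?_, fun c hc => hab.2 ?_⟩
  · rintro _ ⟨i, rfl⟩
    exact hab.1 (add_mem_add ⟨i, rfl⟩ ⟨i, rfl⟩)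
  · rintro _ ⟨_, ⟨i, rfl⟩, _, ⟨j, rfl⟩, rfl⟩
    obtain ⟨k, hik, hjk⟩ := directed_of (· ≤ ·) i j
    exact (add_le_add (hf hik) (hg hjk)).trans (hc ⟨k, rfl⟩)

theorem exists_isLUB_of_forall {α L : Type*} [Preorder L] [Nonempty L]
    (hDed : ∀ T : Set L, T.Nonempty → BddAbove T → ∃ a, IsLUB T a) {p : α → Prop}
    {S : α → Set L} (hS : ∀ a, p a → (S a).Nonempty ∧ BddAbove (S a)) :
    ∃ θ : α → L, ∀ a, p a → IsLUB (S a) (θ a) := by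
  classical
  exact ⟨fun a => if h : p a then (hDed _ (hS a h).1 (hS a h).2).choose else Classical.arbitrary L,
    fun a h => by simpa [h] using (hDed _ (hS a h).1 (hS a h).2).choose_spec⟩

namespace IsFinMeasure

variable {μ ν : Set X → E}

theorem monotone_sum_range (hμ : IsFinMeasure μ) {Δ : ℕ → Set X}
    (hm : ∀ n, MeasurableSet (Δ n)) : Monotone fun N => ∑ n ∈ Finset.range N, μ (Δ n) :=
  (Finset.sum_mono_set_of_nonneg fun n => hμ.2.1 _ (hm n)).comp Finset.range_mono

theorem union (hμ : IsFinMeasure μ) {A B : Set X} (hA : MeasurableSet A)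
    (hB : MeasurableSet B) (hAB : Disjoint A B) : μ (A ∪ B) = μ A + μ B := by
  set Δ : ℕ → Set X := fun n => if n = 0 then A else if n = 1 then B else ∅
  have hm : ∀ n, MeasurableSet (Δ n) := fun n => by
    simp only [Δ]; split_ifs <;> simp [hA, hB]
  have hd : Pairwise (Disjoint on Δ) := by
    refine (pairwise_disjoint_on Δ).2 fun m n hmn => ?_
    rcases n with _ | _ | n
    · omega
    · obtain rfl : m = 0 := by omega
      simpa [Δ] using hAB
    · simp [Δ]
  have hU : ⋃ n, Δ n = A ∪ B := by
    ext x
    simp only [mem_iUnion, mem_union]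
    refine ⟨fun ⟨n, hn⟩ => ?_, ?_⟩
    · simp only [Δ] at hn; split_ifs at hn <;> simp_all
    · rintro (hx | hx)
      exacts [⟨0, by simpa [Δ]⟩, ⟨1, by simpa [Δ]⟩]
  have hsum : ∀ N, 2 ≤ N → ∑ n ∈ Finset.range N, μ (Δ n) = μ A + μ B := fun N hN => by
    rw [Finset.eventually_constant_sum (fun n hn => ?_) hN]
    · simp [Δ, Finset.sum_range_succ]
    · simp [Δ, show n ≠ 0 by omega, show n ≠ 1 by omega, hμ.1]
  rw [← hU]
  refine (hμ.2.2 Δ hm hd).unique ⟨?_, fun c hc => hsum 2 le_rfl ▸ hc ⟨2, rfl⟩⟩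
  rintro _ ⟨N, rfl⟩
  exact (hμ.monotone_sum_range hm (N.le_add_right 2)).trans (hsum _ (Nat.le_add_left 2 N)).le

theorem congr {X E : Type*} [MeasurableSpace X] [Lattice E] [AddCommGroup E]
    {μ ν : Set X → E} (hμ : IsFinMeasure μ) (h : ∀ Δ, MeasurableSet Δ → μ Δ = ν Δ) :
    IsFinMeasure ν := by
  refine ⟨h ∅ .empty ▸ hμ.1, fun Δ hΔ => h Δ hΔ ▸ hμ.2.1 Δ hΔ, fun Δ hm hd => ?_⟩
  rw [← h _ (.iUnion hm)]
  simpa only [← h _ (hm _)] using hμ.2.2 Δ hm hd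

theorem mono (hμ : IsFinMeasure μ) {A B : Set X} (hA : MeasurableSet A) (hB : MeasurableSet B)
    (hAB : A ⊆ B) : μ A ≤ μ B := by
  rw [← union_sdiff_cancel hAB, hμ.union hA (hB.diff hA) disjoint_sdiff_self_right]
  exact le_add_of_nonneg_right (hμ.2.1 _ (hB.diff hA))

theorem add (hμ : IsFinMeasure μ) (hν : IsFinMeasure ν) :
    IsFinMeasure fun Δ => μ Δ + ν Δ := by
  refine ⟨by simp [hμ.1, hν.1], fun Δ hΔ => add_nonneg (hμ.2.1 Δ hΔ) (hν.2.1 Δ hΔ),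
    fun Δ hm hd => ?_⟩
  simpa only [Finset.sum_add_distrib] using isLUB_range_add_of_monotone
    (hμ.monotone_sum_range hm) (hν.monotone_sum_range hm) (hμ.2.2 Δ hm hd) (hν.2.2 Δ hm hd)

end IsFinMeasure

theorem isFinMeasure_zero {X E : Type*} [MeasurableSpace X] [Lattice E] [AddCommGroup E] :
    IsFinMeasure fun _ : Set X => (0 : E) :=
  ⟨rfl, fun _ _ => le_rfl, fun _ _ _ => by simp⟩

theorem isFinMeasure_of_superadditive {θ : Set X → E} (h0 : θ ∅ = 0)
    (hpos : ∀ Δ, MeasurableSet Δ → 0 ≤ θ Δ)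
    (hsuper : ∀ A B, MeasurableSet A → MeasurableSet B → Disjoint A B →
      θ A + θ B ≤ θ (A ∪ B))
    (hle : ∀ Δ : ℕ → Set X, (∀ n, MeasurableSet (Δ n)) → Pairwise (Disjoint on Δ) →
      ∀ c ∈ upperBounds (range fun N => ∑ n ∈ Finset.range N, θ (Δ n)), θ (⋃ n, Δ n) ≤ c) :
    IsFinMeasure θ := by
  refine ⟨h0, hpos, fun Δ hm hd => ⟨?_, hle Δ hm hd⟩⟩
  have hmono : ∀ A B, MeasurableSet A → MeasurableSet B → A ⊆ B → θ A ≤ θ B :=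
    fun A B hA hB hAB => calc
      θ A ≤ θ A + θ (B \ A) := le_add_of_nonneg_right (hpos _ (hB.diff hA))
      _ ≤ θ B := by
        simpa only [union_sdiff_cancel hAB] using
          hsuper A _ hA (hB.diff hA) disjoint_sdiff_self_right
  have hmeas : ∀ N, MeasurableSet (⋃ n < N, Δ n) :=
    fun N => .iUnion fun n => .iUnion fun _ => hm n
  have hsum : ∀ N, ∑ n ∈ Finset.range N, θ (Δ n) ≤ θ (⋃ n < N, Δ n) := by
    intro N
    induction N with
    | zero => simp [h0]
    | succ N ih =>
      rw [Finset.sum_range_succ, biUnion_lt_succ]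
      exact (add_le_add_left ih _).trans (hsuper _ _ (hmeas N) (hm N)
        (disjoint_iUnion₂_left.2 fun n hn => hd hn.ne))
  rintro _ ⟨N, rfl⟩
  exact (hsum N).trans (hmono _ _ (hmeas N) (.iUnion hm) (iUnion₂_subset fun n _ =>
    subset_iUnion Δ n))

theorem IsFinMeasure.sub {μ ν : Set X → E} (hμ : IsFinMeasure μ) (hν : IsFinMeasure ν)
    (hνμ : ∀ Δ, MeasurableSet Δ → ν Δ ≤ μ Δ) : IsFinMeasure fun Δ => μ Δ - ν Δ := by
  refine isFinMeasure_of_superadditive (by simp [hμ.1, hν.1])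
    (fun Δ hΔ => sub_nonneg.2 (hνμ Δ hΔ)) (fun A B hA hB hAB => ?_) fun Δ hm hd c hc => ?_
  · rw [hμ.union hA hB hAB, hν.union hA hB hAB, add_sub_add_comm]
  · rw [sub_le_iff_le_add]
    refine (hμ.2.2 Δ hm hd).2 ?_
    rintro _ ⟨N, rfl⟩
    calc ∑ n ∈ Finset.range N, μ (Δ n)
        = ∑ n ∈ Finset.range N, (μ (Δ n) - ν (Δ n)) + ∑ n ∈ Finset.range N, ν (Δ n) := by
          rw [← Finset.sum_add_distrib]; simp
      _ ≤ c + ν (⋃ n, Δ n) := add_le_add (hc ⟨N, rfl⟩) ((hν.2.2 Δ hm hd).1 ⟨N, rfl⟩)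

theorem IsFinMeasure.inSpanMeasures {X E : Type*} [MeasurableSpace X] [Lattice E]
    [AddCommGroup E] {μ : Set X → E} (hμ : IsFinMeasure μ) :
    InSpanMeasures μ :=
  ⟨μ, fun _ => 0, hμ, isFinMeasure_zero, fun _ _ => (sub_zero _).symm⟩

namespace InSpanMeasures

variable {μ ν : Set X → E}

theorem union (hμ : InSpanMeasures μ) {A B : Set X} (hA : MeasurableSet A)
    (hB : MeasurableSet B) (hAB : Disjoint A B) : μ (A ∪ B) = μ A + μ B := by
  obtain ⟨μ₁, μ₂, h₁, h₂, hμ⟩ := hμ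
  rw [hμ _ (hA.union hB), hμ _ hA, hμ _ hB, h₁.union hA hB hAB, h₂.union hA hB hAB,
    add_sub_add_comm]

theorem add (hμ : InSpanMeasures μ) (hν : InSpanMeasures ν) :
    InSpanMeasures fun Δ => μ Δ + ν Δ := by
  obtain ⟨μ₁, μ₂, hμ₁, hμ₂, hμ⟩ := hμ
  obtain ⟨ν₁, ν₂, hν₁, hν₂, hν⟩ := hν
  refine ⟨_, _, hμ₁.add hν₁, hμ₂.add hν₂, fun Δ hΔ => ?_⟩
  simp only [hμ Δ hΔ, hν Δ hΔ, add_sub_add_comm]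

theorem sub (hμ : InSpanMeasures μ) (hν : InSpanMeasures ν) :
    InSpanMeasures fun Δ => μ Δ - ν Δ := by
  obtain ⟨μ₁, μ₂, hμ₁, hμ₂, hμ⟩ := hμ
  obtain ⟨ν₁, ν₂, hν₁, hν₂, hν⟩ := hν
  refine ⟨_, _, hμ₁.add hν₂, hμ₂.add hν₁, fun Δ hΔ => ?_⟩
  simp only [hμ Δ hΔ, hν Δ hΔ]
  abel

theorem isFinMeasure_of_nonneg (hμ : InSpanMeasures μ) (hpos : ∀ Δ, MeasurableSet Δ → 0 ≤ μ Δ) :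
    IsFinMeasure μ := by
  obtain ⟨μ₁, μ₂, h₁, h₂, hμ⟩ := hμ
  refine (h₁.sub h₂ fun Δ hΔ => ?_).congr fun Δ hΔ => (hμ Δ hΔ).symm
  simpa [hμ Δ hΔ] using hpos Δ hΔ

end InSpanMeasures

theorem IsFinMeasure.exists_rieszKantorovich_sup
    (hDed : ∀ T : Set E, T.Nonempty → BddAbove T → ∃ a, IsLUB T a) {α β : Set X → E}
    (hα : IsFinMeasure α) (hβ : IsFinMeasure β) :
    ∃ η, IsFinMeasure η ∧ ∀ Δ, MeasurableSet Δ →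
      IsLUB ((fun A => α A + β (Δ \ A)) '' {A | MeasurableSet A ∧ A ⊆ Δ}) (η Δ) := by
  obtain ⟨η, hη⟩ := exists_isLUB_of_forall hDed (p := MeasurableSet)
    (S := fun Δ => (fun A => α A + β (Δ \ A)) '' {A | MeasurableSet A ∧ A ⊆ Δ})
    fun Δ hΔ => ⟨⟨_, mem_image_of_mem _ ⟨MeasurableSet.empty, empty_subset Δ⟩⟩,
      α Δ + β Δ, forall_mem_image.2 fun A ⟨hA, hAΔ⟩ =>
        add_le_add (hα.mono hA hΔ hAΔ) (hβ.mono (hΔ.diff hA) hΔ sdiff_subset)⟩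
  have hmem : ∀ Δ A, MeasurableSet Δ → MeasurableSet A → A ⊆ Δ → α A + β (Δ \ A) ≤ η Δ :=
    fun Δ A hΔ hA hAΔ => (hη Δ hΔ).1 (mem_image_of_mem _ ⟨hA, hAΔ⟩)
  have hβη : ∀ Δ, MeasurableSet Δ → β Δ ≤ η Δ := fun Δ hΔ => by
    simpa [hα.1] using hmem Δ ∅ hΔ .empty (empty_subset Δ)
  refine ⟨η, isFinMeasure_of_superadditive ?_ (fun Δ hΔ => (hβ.2.1 Δ hΔ).trans (hβη Δ hΔ))
    ?_ ?_, hη⟩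
  · refine le_antisymm ((hη ∅ .empty).2 (forall_mem_image.2 fun A ⟨_, hA⟩ => ?_)) ?_
    · simp [subset_empty_iff.1 hA, hα.1, hβ.1]
    · simpa [hβ.1] using hβη ∅ .empty
  · intro A B hA hB hAB
    refine ((hη A hA).add (hη B hB)).2 ?_
    rintro _ ⟨_, ⟨A', ⟨hA', hA'A⟩, rfl⟩, _, ⟨B', ⟨hB', hB'B⟩, rfl⟩, rfl⟩
    have hdiff : (A ∪ B) \ (A' ∪ B') = A \ A' ∪ B \ B' := by
      ext x
      have hx : x ∈ A → x ∉ B := fun h => disjoint_left.1 hAB h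
      have := @hA'A x
      have := @hB'B x
      simp only [mem_union, mem_sdiff]
      tauto
    dsimp only
    rw [add_add_add_comm, ← hα.union hA' hB' (hAB.mono hA'A hB'B),
      ← hβ.union (hA.diff hA') (hB.diff hB') (hAB.mono sdiff_subset sdiff_subset), ← hdiff]
    exact hmem _ _ (hA.union hB) (hA'.union hB') (union_subset_union hA'A hB'B)
  · intro Δ hm hd c hc
    refine (hη _ (.iUnion hm)).2 (forall_mem_image.2 fun A ⟨hA, hAΔ⟩ => ?_)
    have hαA := hα.2.2 (fun n => A ∩ Δ n) (fun n => hA.inter (hm n))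
      fun i j hij => (hd hij).mono inter_subset_right inter_subset_right
    have hβA := hβ.2.2 (fun n => Δ n \ A) (fun n => (hm n).diff hA)
      fun i j hij => (hd hij).mono sdiff_subset sdiff_subset
    rw [← inter_iUnion, inter_eq_left.2 hAΔ] at hαA
    rw [← iUnion_sdiff] at hβA
    refine (isLUB_range_add_of_monotone (hα.monotone_sum_range fun n => hA.inter (hm n))
      (hβ.monotone_sum_range fun n => (hm n).diff hA) hαA hβA).2 ?_
    rintro _ ⟨N, rfl⟩
    dsimp only
    rw [← Finset.sum_add_distrib]
    refine (Finset.sum_le_sum fun n _ => ?_).trans (hc ⟨N, rfl⟩)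
    simpa only [sdiff_inter_self_eq_sdiff] using
      hmem _ _ (hm n) (hA.inter (hm n)) inter_subset_right

theorem InSpanMeasures.exists_sup
    (hDed : ∀ T : Set E, T.Nonempty → BddAbove T → ∃ a, IsLUB T a) {μ ν : Set X → E}
    (hμ : InSpanMeasures μ) (hν : InSpanMeasures ν) :
    ∃ ξ, InSpanMeasures ξ ∧ MeasLE μ ξ ∧ MeasLE ν ξ ∧
      ∀ ρ, InSpanMeasures ρ → MeasLE μ ρ → MeasLE ν ρ → MeasLE ξ ρ := by
  obtain ⟨μ₁, μ₂, hμ₁, hμ₂, hμ⟩ := hμ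
  obtain ⟨ν₁, ν₂, hν₁, hν₂, hν⟩ := hν
  set m : Set X → E := fun Δ => μ₂ Δ + ν₂ Δ
  have hm : IsFinMeasure m := hμ₂.add hν₂
  -- the supremum is `(μ + m) ⊔ (ν + m) - m`, a sup of two finite measures
  have hμm : ∀ Δ, MeasurableSet Δ → μ Δ + m Δ = μ₁ Δ + ν₂ Δ := fun Δ hΔ => by
    simp only [m, hμ Δ hΔ]; abel
  have hνm : ∀ Δ, MeasurableSet Δ → ν Δ + m Δ = ν₁ Δ + μ₂ Δ := fun Δ hΔ => by
    simp only [m, hν Δ hΔ]; abel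
  obtain ⟨η, hηfin, hη⟩ := (hμ₁.add hν₂).exists_rieszKantorovich_sup hDed (hν₁.add hμ₂)
  refine ⟨fun Δ => η Δ - m Δ, ⟨η, m, hηfin, hm, fun _ _ => rfl⟩, fun Δ hΔ => ?_,
    fun Δ hΔ => ?_, fun ρ hρ hμρ hνρ Δ hΔ => ?_⟩
  · rw [le_sub_iff_add_le, hμm Δ hΔ]
    exact (hη Δ hΔ).1 ⟨Δ, ⟨hΔ, subset_rfl⟩, by simp [hν₁.1, hμ₂.1]⟩
  · rw [le_sub_iff_add_le, hνm Δ hΔ]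
    exact (hη Δ hΔ).1 ⟨∅, ⟨.empty, empty_subset Δ⟩, by simp [hμ₁.1, hν₂.1]⟩
  · rw [sub_le_iff_le_add]
    refine (hη Δ hΔ).2 (forall_mem_image.2 fun A ⟨hA, hAΔ⟩ => ?_)
    have hB := hΔ.diff hA
    have hρm := hρ.add hm.inSpanMeasures
    calc μ₁ A + ν₂ A + (ν₁ (Δ \ A) + μ₂ (Δ \ A))
        = (μ A + m A) + (ν (Δ \ A) + m (Δ \ A)) := by rw [hμm A hA, hνm _ hB]
      _ ≤ (ρ A + m A) + (ρ (Δ \ A) + m (Δ \ A)) :=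
        add_le_add (add_le_add_left (hμρ A hA) _) (add_le_add_left (hνρ _ hB) _)
      _ = ρ Δ + m Δ := by
        rw [← hρm.union hA hB disjoint_sdiff_self_right, union_sdiff_cancel hAΔ]

theorem isFinMeasure_of_directedOn_isLUB {F : Set (Set X → E)}
    (hF : ∀ f ∈ F, IsFinMeasure f) (hne : F.Nonempty) (hdir : DirectedOn MeasLE F)
    {θ : Set X → E} (hθ : ∀ Δ, MeasurableSet Δ → IsLUB ((fun f => f Δ) '' F) (θ Δ)) :
    IsFinMeasure θ := by
  obtain ⟨f₀, hf₀⟩ := hne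
  have hle : ∀ f ∈ F, ∀ Δ, MeasurableSet Δ → f Δ ≤ θ Δ :=
    fun f hf Δ hΔ => (hθ Δ hΔ).1 (mem_image_of_mem _ hf)
  refine isFinMeasure_of_superadditive ?_
    (fun Δ hΔ => ((hF f₀ hf₀).2.1 Δ hΔ).trans (hle f₀ hf₀ Δ hΔ)) ?_ ?_
  · refine le_antisymm ((hθ ∅ .empty).2 (forall_mem_image.2 fun f hf => (hF f hf).1.le)) ?_
    simpa [(hF f₀ hf₀).1] using hle f₀ hf₀ ∅ .empty
  · intro A B hA hB hAB
    refine ((hθ A hA).add (hθ B hB)).2 ?_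
    rintro _ ⟨_, ⟨f, hf, rfl⟩, _, ⟨g, hg, rfl⟩, rfl⟩
    obtain ⟨h, hh, hfh, hgh⟩ := hdir f hf g hg
    calc f A + g B ≤ h A + h B := add_le_add (hfh A hA) (hgh B hB)
      _ = h (A ∪ B) := ((hF h hh).union hA hB hAB).symm
      _ ≤ θ (A ∪ B) := hle h hh _ (hA.union hB)
  · intro Δ hm hd c hc
    refine (hθ _ (.iUnion hm)).2 (forall_mem_image.2 fun f hf => ?_)
    refine ((hF f hf).2.2 Δ hm hd).2 ?_
    rintro _ ⟨N, rfl⟩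
    exact (Finset.sum_le_sum fun n _ => hle f hf _ (hm n)).trans (hc ⟨N, rfl⟩)

theorem InSpanMeasures.exists_sSup
    (hDed : ∀ T : Set E, T.Nonempty → BddAbove T → ∃ a, IsLUB T a) {𝒮 : Set (Set X → E)}
    (hne : 𝒮.Nonempty) (hsp : ∀ μ ∈ 𝒮, InSpanMeasures μ)
    (hbdd : ∃ b, InSpanMeasures b ∧ ∀ μ ∈ 𝒮, MeasLE μ b) :
    ∃ ξ, InSpanMeasures ξ ∧ (∀ μ ∈ 𝒮, MeasLE μ ξ) ∧
      ∀ ρ, InSpanMeasures ρ → (∀ μ ∈ 𝒮, MeasLE μ ρ) → MeasLE ξ ρ := by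
  obtain ⟨μ₀, hμ₀⟩ := hne
  obtain ⟨b, hb, hbS⟩ := hbdd
  set U := {ρ | InSpanMeasures ρ ∧ ∀ μ ∈ 𝒮, MeasLE μ ρ}
  set F := {θ | IsFinMeasure θ ∧ ∀ ρ ∈ U, MeasLE (fun Δ => μ₀ Δ + θ Δ) ρ}
  have h0F : (fun _ => 0) ∈ F :=
    ⟨isFinMeasure_zero, fun ρ hρ Δ hΔ => by simpa using hρ.2 μ₀ hμ₀ Δ hΔ⟩
  have hjoin : ∀ μ ν, InSpanMeasures μ → InSpanMeasures ν → (∀ ρ ∈ U, MeasLE μ ρ) →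
      (∀ ρ ∈ U, MeasLE ν ρ) → MeasLE μ₀ ν →
      ∃ θ ∈ F, MeasLE μ (fun Δ => μ₀ Δ + θ Δ) ∧ MeasLE ν (fun Δ => μ₀ Δ + θ Δ) := by
    intro μ ν hμ hν hμU hνU hμ₀ν
    obtain ⟨ξ, hξ, hμξ, hνξ, hleast⟩ := hμ.exists_sup hDed hν
    refine ⟨fun Δ => ξ Δ - μ₀ Δ, ⟨(hξ.sub (hsp μ₀ hμ₀)).isFinMeasure_of_nonneg
      fun Δ hΔ => sub_nonneg.2 ((hμ₀ν Δ hΔ).trans (hνξ Δ hΔ)), fun ρ hρ Δ hΔ => ?_⟩,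
      fun Δ hΔ => ?_, fun Δ hΔ => ?_⟩ <;> simp only [add_sub_cancel]
    exacts [hleast ρ hρ.1 (hμU ρ hρ) (hνU ρ hρ) Δ hΔ, hμξ Δ hΔ, hνξ Δ hΔ]
  have hdir : DirectedOn MeasLE F := by
    rintro θ₁ ⟨hθ₁, hθ₁U⟩ θ₂ ⟨hθ₂, hθ₂U⟩
    obtain ⟨θ, hθ, h₁, h₂⟩ := hjoin _ _ ((hsp μ₀ hμ₀).add hθ₁.inSpanMeasures)
      ((hsp μ₀ hμ₀).add hθ₂.inSpanMeasures) hθ₁U hθ₂U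
      fun Δ hΔ => le_add_of_nonneg_right (hθ₂.2.1 Δ hΔ)
    exact ⟨θ, hθ, fun Δ hΔ => le_of_add_le_add_left (h₁ Δ hΔ),
      fun Δ hΔ => le_of_add_le_add_left (h₂ Δ hΔ)⟩
  obtain ⟨θ, hθ⟩ := exists_isLUB_of_forall hDed (p := MeasurableSet)
    (S := fun Δ => (fun f => f Δ) '' F) fun Δ hΔ => ⟨⟨_, mem_image_of_mem _ h0F⟩,
      b Δ - μ₀ Δ, forall_mem_image.2 fun f hf => le_sub_iff_add_le'.2 (hf.2 b ⟨hb, hbS⟩ Δ hΔ)⟩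
  have hθfin := isFinMeasure_of_directedOn_isLUB (fun f hf => hf.1) ⟨_, h0F⟩ hdir hθ
  refine ⟨fun Δ => μ₀ Δ + θ Δ, (hsp μ₀ hμ₀).add hθfin.inSpanMeasures,
    fun μ hμ Δ hΔ => ?_, fun ρ hρ hρS Δ hΔ => ?_⟩
  · obtain ⟨f, hf, hμf, -⟩ := hjoin μ μ₀ (hsp μ hμ) (hsp μ₀ hμ₀) (fun ρ hρ => hρ.2 μ hμ)
      (fun ρ hρ => hρ.2 μ₀ hμ₀) fun _ _ => le_rfl
    exact (hμf Δ hΔ).trans (add_le_add_right ((hθ Δ hΔ).1 (mem_image_of_mem _ hf)) _)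
  · rw [← le_sub_iff_add_le']
    exact (hθ Δ hΔ).2 (forall_mem_image.2 fun f hf =>
      le_sub_iff_add_le'.2 (hf.2 ρ ⟨hρ, hρS⟩ Δ hΔ))

/-- for `E` Dedekind complete, the span `M(X,Ω,E)` of the finite
`E⁺`-valued measures, ordered pointwise, is a Dedekind complete vector lattice
whose positive cone consists exactly of the finite `E⁺`-valued measures; in
particular a pointwise-positive difference of finite measures is σ-additive. -/
theorem stmt_17 (hDed : ∀ T : Set E, T.Nonempty → BddAbove T → ∃ a, IsLUB T a) :
    -- the positive cone of the span is the set of finite measures; in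
    -- particular `μ − ν ≥ 0` pointwise implies `μ − ν` is σ-additive
    (∀ μ ν : Set X → E, IsFinMeasure μ → IsFinMeasure ν →
      (∀ Δ, MeasurableSet Δ → ν Δ ≤ μ Δ) →
      IsFinMeasure (fun Δ => μ Δ - ν Δ)) ∧
    (∀ μ : Set X → E, InSpanMeasures μ → (∀ Δ, MeasurableSet Δ → 0 ≤ μ Δ) →
      IsFinMeasure μ) ∧
    -- `M(X,Ω,E)` is a lattice: any two elements have a supremum in it
    (∀ μ ν : Set X → E, InSpanMeasures μ → InSpanMeasures ν →
      ∃ ξ : Set X → E, InSpanMeasures ξ ∧ MeasLE μ ξ ∧ MeasLE ν ξ ∧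
        ∀ ρ : Set X → E, InSpanMeasures ρ → MeasLE μ ρ → MeasLE ν ρ →
          MeasLE ξ ρ) ∧
    -- `M(X,Ω,E)` is Dedekind complete
    ∀ 𝒮 : Set (Set X → E), 𝒮.Nonempty → (∀ μ ∈ 𝒮, InSpanMeasures μ) →
      (∃ b : Set X → E, InSpanMeasures b ∧ ∀ μ ∈ 𝒮, MeasLE μ b) →
      ∃ ξ : Set X → E, InSpanMeasures ξ ∧ (∀ μ ∈ 𝒮, MeasLE μ ξ) ∧
        ∀ ρ : Set X → E, InSpanMeasures ρ → (∀ μ ∈ 𝒮, MeasLE μ ρ) →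
          MeasLE ξ ρ := by
  exact ⟨fun μ ν hμ hν hνμ => hμ.sub hν hνμ,
    fun μ hμ hpos => hμ.isFinMeasure_of_nonneg hpos,
    fun μ ν hμ hν => hμ.exists_sup hDed hν,
    fun 𝒮 hne hsp hbdd => InSpanMeasures.exists_sSup hDed hne hsp hbdd⟩
end
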